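/- For every n ≥ 1 and every r ≥ 0, the number of non-self-conjugate partitions in the layer L_r(n) is even; that is, the set {λ ∈ L_r(n) : λ ≠ λ'} has even cardinality. -/

import Mathlib

namespace PartitionLayers

open Nat Multiset

/-! ## The partition graph and local simplex dimension -/

/-- `q` is obtained from `p` by an elementary transfer: decrease one part by 1
(possibly deleting it if it reaches 0) and increase another part by 1
(where `b = 0` encodes the creation of a new part of size 1). -/
def IsTransfer {n : ℕ} (p q : Nat.Partition n) : Prop :=
  ∃ a ∈ p.parts, ∃ b : ℕ, (b = 0 ∨ b ∈ p.parts.erase a) ∧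
    q.parts = (b + 1) ::ₘ
      (if a = 1 then (p.parts.erase a).erase b
       else (a - 1) ::ₘ (p.parts.erase a).erase b)

/-- The partition graph `G_n` on `Par(n)`. -/
def partitionGraph (n : ℕ) : SimpleGraph (Nat.Partition n) where
  Adj p q := p ≠ q ∧ (IsTransfer p q ∨ IsTransfer q p)
  symm := ⟨fun _ _ h => ⟨h.1.symm, h.2.symm⟩⟩
  loopless := ⟨fun _ h => h.1 rfl⟩

/-- `ω_loc(λ)`: the maximum size of a clique of `G_n` containing `λ`. -/
noncomputable def omegaLoc {n : ℕ} (p : Nat.Partition n) : ℕ :=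
  sSup {k | ∃ s : Finset (Nat.Partition n), (partitionGraph n).IsNClique k s ∧ p ∈ s}

/-- The local simplex dimension `dim_loc(λ) = ω_loc(λ) - 1`. -/
noncomputable def dimLoc {n : ℕ} (p : Nat.Partition n) : ℕ :=
  omegaLoc p - 1

/-- The simplex layer `L_r(n) = {λ ⊢ n : dim_loc(λ) = r}`. -/
noncomputable def layer (n r : ℕ) : Set (Nat.Partition n) :=
  {p | dimLoc p = r}

/-- The realized layer spectrum `Spec_Δ(n)`. -/
noncomputable def Spec (n : ℕ) : Set ℕ :=
  {r | (layer n r).Nonempty}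

/-- The top local simplex dimension `Δ_loc(n) = max_{λ ⊢ n} dim_loc(λ)`. -/
noncomputable def DeltaLoc (n : ℕ) : ℕ :=
  sSup (Set.range (dimLoc (n := n)))

/-- The bottom local simplex dimension `δ_loc(n) = min_{λ ⊢ n} dim_loc(λ)`. -/
noncomputable def deltaLoc (n : ℕ) : ℕ :=
  sInf (Set.range (dimLoc (n := n)))

/-- The first-occurrence index `n_r^first = min {n ≥ 1 : L_r(n) ≠ ∅}`. -/
noncomputable def nFirst (r : ℕ) : ℕ :=
  sInf {n | 1 ≤ n ∧ (layer n r).Nonempty}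

/-! ## Conjugation -/

private lemma conj_sum_aux (N : ℕ) (s : Multiset ℕ) (hs : ∀ x ∈ s, x ≤ N) :
    ((Multiset.range N).map fun j => s.countP (fun p => decide (j < p))).sum = s.sum := by
  induction s using Multiset.induction with
  | empty => simp
  | cons a s ih =>
      have ha : a ≤ N := hs a (mem_cons_self a s)
      have hs' : ∀ x ∈ s, x ≤ N := fun x hx => hs x (mem_cons_of_mem hx)
      have hcnt : ∀ j : ℕ, (a ::ₘ s).countP (fun p => decide (j < p)) =
          s.countP (fun p => decide (j < p)) + if j < a then 1 else 0 := by
        intro j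
        rw [countP_cons]
        simp
      have hone : (∑ j ∈ Finset.range N, if j < a then (1 : ℕ) else 0) = a := by
        have hsub : Finset.range a ⊆ Finset.range N := Finset.range_subset_range.mpr ha
        rw [← Finset.sum_subset hsub (fun j _ hj => if_neg (by simpa using hj))]
        calc (∑ j ∈ Finset.range a, if j < a then (1 : ℕ) else 0)
            = ∑ _j ∈ Finset.range a, (1 : ℕ) :=
              Finset.sum_congr rfl (fun j hj => if_pos (Finset.mem_range.mp hj))
          _ = a := by simp
      calc ((Multiset.range N).map fun j => (a ::ₘ s).countP (fun p => decide (j < p))).sum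
          = ((Multiset.range N).map fun j =>
              s.countP (fun p => decide (j < p)) + if j < a then 1 else 0).sum := by
            congr 1
            exact Multiset.map_congr rfl (fun j _ => hcnt j)
        _ = ((Multiset.range N).map fun j => s.countP (fun p => decide (j < p))).sum
              + ((Multiset.range N).map fun j => if j < a then 1 else 0).sum := by
            rw [← Multiset.sum_map_add]
        _ = s.sum + a := by
            rw [ih hs']
            congr 1
        _ = (a ::ₘ s).sum := by rw [Multiset.sum_cons]; omega

/-- The conjugate (transpose) partition `λ'`: its `j`-th column length is the
number of parts of `λ` exceeding `j`. -/
def conj {n : ℕ} (p : Nat.Partition n) : Nat.Partition n :=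
  Nat.Partition.ofSums n
    ((Multiset.range n).map fun j => p.parts.countP (fun q => decide (j < q)))
    (by
      have hle : ∀ x ∈ p.parts, x ≤ n := by
        intro x hx
        have h1 := Multiset.single_le_sum (fun y _ => Nat.zero_le y) x hx
        rw [p.parts_sum] at h1
        exact h1
      rw [conj_sum_aux n p.parts hle]
      exact p.parts_sum)

/-! ## Corners, admissible transfers, and the star/top capacities -/

/-- The weakly decreasing part function of a partition: `partFun p i` is the
`i`-th part (0-indexed), with value `0` beyond the number of parts.  Its Young
diagram is `{(i, j) : j < partFun p i}`. -/
def partFun {n : ℕ} (p : Nat.Partition n) : ℕ → ℕ :=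
  fun i => ((p.parts.sort (· ≤ ·)).reverse).getD i 0

/-- Row `i` contains a removable corner of the diagram with row lengths `f`
(namely the cell `(i, f i - 1)`). -/
def HasRemovableCorner (f : ℕ → ℕ) (i : ℕ) : Prop :=
  f (i + 1) < f i

/-- Row `j` contains an addable corner of the diagram with row lengths `f`
(namely the position `(j, f j)`). -/
def HasAddableCorner (f : ℕ → ℕ) (j : ℕ) : Prop :=
  j = 0 ∨ f j < f (j - 1)

/-- The row-length function obtained by moving one cell from the end of row `i`
to the end of row `j`. -/
def transferFun (f : ℕ → ℕ) (i j : ℕ) : ℕ → ℕ :=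
  Function.update (Function.update f i (f i - 1)) j (f j + 1)

/-- The transfer `λ(c → a)` moving the removable corner in row `i` to the
addable corner in row `j` is admissible: it yields a partition (the resulting
row lengths are weakly decreasing) distinct from the original one. -/
def AdmissibleTransfer (f : ℕ → ℕ) (i j : ℕ) : Prop :=
  HasRemovableCorner f i ∧ HasAddableCorner f j ∧ i ≠ j ∧
    ∀ k, transferFun f i j (k + 1) ≤ transferFun f i j k

/-- The star-capacity `s(λ)`: the maximum, over removable corners `c` of `λ`,
of the number of addable corners `a` with `λ(c → a)` admissible.  (Rows are
indexed in `range (n+1)`, which contains all corner rows; rows without a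
removable corner contribute `0`.) -/
noncomputable def sCap {n : ℕ} (p : Nat.Partition n) : ℕ :=
  (Finset.range (n + 1)).sup fun i =>
    Set.ncard {j | AdmissibleTransfer (partFun p) i j}

/-- The top-capacity `t(λ)`: the maximum, over addable corners `a` of `λ`,
of the number of removable corners `c` with `λ(c → a)` admissible. -/
noncomputable def tCap {n : ℕ} (p : Nat.Partition n) : ℕ :=
  (Finset.range (n + 1)).sup fun j =>
    Set.ncard {i | AdmissibleTransfer (partFun p) i j}

/-! ## Adjacent-layer phase boundaries -/

/-- The adjacent-layer edge boundary `∂^E_{r,r+1}(n)`: edges of `G_n` joining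
`L_r(n)` to `L_{r+1}(n)`. -/
noncomputable def edgeBoundary (n r : ℕ) : Set (Sym2 (Nat.Partition n)) :=
  {e | ∃ p q, (partitionGraph n).Adj p q ∧ p ∈ layer n r ∧ q ∈ layer n (r + 1) ∧ e = s(p, q)}

/-- The adjacent-layer vertex boundary `∂^V_{r,r+1}(n)`: vertices incident to
an edge of `∂^E_{r,r+1}(n)`. -/
noncomputable def vertexBoundary (n r : ℕ) : Set (Nat.Partition n) :=
  {v | ∃ e ∈ edgeBoundary n r, v ∈ e}

/-- The lower-side boundary `∂^-_{r,r+1}(n) = ∂^V_{r,r+1}(n) ∩ L_r(n)`. -/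
noncomputable def lowerBoundary (n r : ℕ) : Set (Nat.Partition n) :=
  vertexBoundary n r ∩ layer n r

/-- The upper-side boundary `∂^+_{r,r+1}(n) = ∂^V_{r,r+1}(n) ∩ L_{r+1}(n)`. -/
noncomputable def upperBoundary (n r : ℕ) : Set (Nat.Partition n) :=
  vertexBoundary n r ∩ layer n (r + 1)


variable {n : ℕ}

/-- column count -/
def cnt {n : ℕ} (p : Nat.Partition n) (j : ℕ) : ℕ := p.parts.countP (fun x => j < x)

lemma countP_mono (s : Multiset ℕ) {p q : ℕ → Prop} [DecidablePred p] [DecidablePred q]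
    (h : ∀ x ∈ s, p x → q x) : s.countP p ≤ s.countP q := by
  induction s using Multiset.induction with
  | empty => simp
  | cons a t ih =>
      rw [Multiset.countP_cons, Multiset.countP_cons]
      have h2 := ih (fun x hx => h x (mem_cons_of_mem hx))
      have ha := h a (mem_cons_self a t)
      split_ifs with h3 h4
      all_goals first | omega | exact absurd (ha ‹_›) ‹_›

lemma mem_parts_le (p : Nat.Partition n) {x : ℕ} (hx : x ∈ p.parts) : x ≤ n := by
  have h1 := Multiset.single_le_sum (fun y _ => Nat.zero_le y) x hx
  rw [p.parts_sum] at h1; exact h1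

lemma zero_not_mem_parts (p : Nat.Partition n) : 0 ∉ p.parts := by
  intro h; exact absurd (p.parts_pos h) (lt_irrefl 0)

lemma cnt_zero_of_le (p : Nat.Partition n) {k : ℕ} (hk : n ≤ k) : cnt p k = 0 :=
  Multiset.countP_eq_zero.mpr fun x hx => by have := mem_parts_le p hx; omega

lemma cnt_anti (p : Nat.Partition n) {k k' : ℕ} (h : k ≤ k') : cnt p k' ≤ cnt p k :=
  countP_mono _ (fun x _ hx => lt_of_le_of_lt h hx)

lemma conj_parts (p : Nat.Partition n) :
    (conj p).parts = (((Multiset.range n).map fun j => cnt p j).filter (· ≠ 0)) := by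
  show (((Multiset.range n).map fun j => p.parts.countP fun q => decide (j < q)).filter (· ≠ 0)) = _
  simp only [cnt, decide_eq_true_eq]

lemma countP_range_eq (P : ℕ → Prop) [DecidablePred P] :
    (Multiset.range n).countP P = ((Finset.range n).filter P).card := by
  rw [Multiset.countP_eq_card_filter, Finset.card_def, Finset.filter_val, Finset.range_val]

lemma lt_countP_range (f : ℕ → ℕ) (hf : ∀ ⦃k k'⦄, k ≤ k' → f k' ≤ f k)
    (h0 : ∀ k, n ≤ k → f k = 0) (j j' : ℕ) :
    (j' < (Multiset.range n).countP fun k => j < f k) ↔ j < f j' := by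
  rw [countP_range_eq]
  constructor
  · intro h
    by_contra hc
    push_neg at hc
    have hsub : (Finset.range n).filter (fun k => j < f k) ⊆ Finset.range j' := by
      intro k hk
      simp only [Finset.mem_filter, Finset.mem_range] at hk ⊢
      by_contra hk2
      push_neg at hk2
      have := le_trans (hf hk2) hc
      omega
    have := Finset.card_le_card hsub
    rw [Finset.card_range] at this
    omega
  · intro h
    have hj'n : j' < n := by
      by_contra hc; push_neg at hc
      rw [h0 j' hc] at h; omega
    have hsub : Finset.range (j' + 1) ⊆ (Finset.range n).filter (fun k => j < f k) := by
      intro k hk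
      simp only [Finset.mem_range] at hk
      simp only [Finset.mem_filter, Finset.mem_range]
      exact ⟨lt_of_le_of_lt (Nat.le_of_lt_succ hk) hj'n,
        lt_of_lt_of_le h (hf (Nat.le_of_lt_succ hk))⟩
    have := Finset.card_le_card hsub
    rw [Finset.card_range] at this
    omega

lemma cnt_conj (p : Nat.Partition n) (j : ℕ) :
    cnt (conj p) j = (Multiset.range n).countP fun k => j < cnt p k := by
  rw [cnt, conj_parts, Multiset.countP_filter, Multiset.countP_map,
    Multiset.countP_eq_card_filter]
  congr 1
  apply Multiset.filter_congr
  intro k _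
  constructor
  · exact fun h => h.1
  · exact fun h => ⟨h, by omega⟩

lemma lt_cnt_conj (p : Nat.Partition n) (j j' : ℕ) :
    j' < cnt (conj p) j ↔ j < cnt p j' := by
  rw [cnt_conj]
  exact lt_countP_range (cnt p) (fun k k' h => cnt_anti p h)
    (fun k hk => cnt_zero_of_le p hk) j j'

lemma nat_eq_of_lt_iff {A B : ℕ} (h : ∀ k, k < A ↔ k < B) : A = B := by
  by_contra hne
  rcases Nat.lt_or_ge A B with h1 | h1
  · exact Nat.lt_irrefl A ((h A).mpr h1)
  · have h2 : B < A := lt_of_le_of_ne h1 (Ne.symm hne)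
    exact Nat.lt_irrefl B ((h B).mp h2)

lemma countP_split (s : Multiset ℕ) (v : ℕ) :
    s.countP (fun x => v < x) + s.count v = s.countP (fun x => v ≤ x) := by
  induction s using Multiset.induction with
  | empty => simp
  | cons a t ih =>
      rw [countP_cons, countP_cons, count_cons]
      split_ifs <;> omega

lemma cnt_ext {p q : Nat.Partition n} (h : ∀ j, cnt p j = cnt q j) : p = q := by
  apply Nat.Partition.ext
  rw [Multiset.ext]
  intro v
  match v with
  | 0 =>
      rw [Multiset.count_eq_zero.mpr (zero_not_mem_parts p),
        Multiset.count_eq_zero.mpr (zero_not_mem_parts q)]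
  | (m + 1) =>
      have hp := countP_split p.parts (m + 1)
      have hq := countP_split q.parts (m + 1)
      have hp2 : p.parts.countP (fun x => m + 1 ≤ x) = cnt p m :=
        Multiset.countP_congr rfl (fun x _ => propext (by omega))
      have hq2 : q.parts.countP (fun x => m + 1 ≤ x) = cnt q m :=
        Multiset.countP_congr rfl (fun x _ => propext (by omega))
      have e1 := h m
      have e2 := h (m + 1)
      simp only [cnt] at hp2 hq2 e1 e2
      omega

lemma conj_conj (p : Nat.Partition n) : conj (conj p) = p := by
  apply cnt_ext
  intro j
  apply nat_eq_of_lt_iff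
  intro k
  rw [lt_cnt_conj, lt_cnt_conj]

lemma transfer_cnt {p q : Nat.Partition n} {a b : ℕ} (ha : a ∈ p.parts)
    (hb : b = 0 ∨ b ∈ p.parts.erase a)
    (hq : q.parts = (b + 1) ::ₘ (if a = 1 then (p.parts.erase a).erase b
       else (a - 1) ::ₘ (p.parts.erase a).erase b)) (j : ℕ) :
    cnt q j + (if j < a then 1 else 0) + (if j < b then 1 else 0)
      = cnt p j + (if j < b + 1 then 1 else 0) + (if j < a - 1 then 1 else 0) := by
  have ha1 : 1 ≤ a := p.parts_pos ha
  rcases hb with hb | hb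
  · subst hb
    have hs0 : (p.parts.erase a).erase 0 = p.parts.erase a :=
      Multiset.erase_of_notMem (fun h => zero_not_mem_parts p (Multiset.mem_of_mem_erase h))
    rw [hs0] at hq
    have hpp : p.parts = a ::ₘ p.parts.erase a := (Multiset.cons_erase ha).symm
    simp only [cnt, hq, Multiset.countP_cons, apply_ite (Multiset.countP (fun x => j < x))]
    conv_rhs => rw [hpp]
    rw [Multiset.countP_cons]
    split_ifs <;> omega
  · have hE : p.parts.erase a = b ::ₘ (p.parts.erase a).erase b := (Multiset.cons_erase hb).symm
    have hpp : p.parts = a ::ₘ b ::ₘ (p.parts.erase a).erase b := by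
      conv_lhs => rw [← Multiset.cons_erase ha, hE]
    simp only [cnt, hq, Multiset.countP_cons, apply_ite (Multiset.countP (fun x => j < x))]
    conv_rhs => rw [hpp]
    rw [Multiset.countP_cons, Multiset.countP_cons]
    split_ifs <;> omega

lemma transfer_ne {p q : Nat.Partition n} {a b : ℕ} (ha : a ∈ p.parts)
    (hb : b = 0 ∨ b ∈ p.parts.erase a)
    (hq : q.parts = (b + 1) ::ₘ (if a = 1 then (p.parts.erase a).erase b
       else (a - 1) ::ₘ (p.parts.erase a).erase b)) (hpq : p ≠ q) : b ≠ a - 1 := by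
  intro hba
  apply hpq
  apply cnt_ext
  intro j
  have h := transfer_cnt ha hb hq j
  have ha1 : 1 ≤ a := p.parts_pos ha
  split_ifs at h <;> omega

lemma isTransfer_conj {p q : Nat.Partition n} (hpq : p ≠ q) (hT : IsTransfer p q) :
    IsTransfer (conj p) (conj q) := by
  obtain ⟨a, ha, b, hb, hq⟩ := hT
  have ha1 : 1 ≤ a := p.parts_pos ha
  have han : a ≤ n := mem_parts_le p ha
  have hne : b ≠ a - 1 := transfer_ne ha hb hq hpq
  have hbn : b < n := by
    rcases hb with rfl | hb
    · omega
    · have hsum : a + b ≤ n := by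
        have h1 : a ::ₘ b ::ₘ ((p.parts.erase a).erase b) = p.parts := by
          conv_rhs => rw [← Multiset.cons_erase ha, ← Multiset.cons_erase hb]
        have h2 := p.parts_sum
        rw [← h1, Multiset.sum_cons, Multiset.sum_cons] at h2
        omega
      have hbp : 1 ≤ b := p.parts_pos (Multiset.mem_of_mem_erase hb)
      omega
  have hApos : 1 ≤ cnt p (a - 1) :=
    Multiset.countP_pos.mpr ⟨a, ha, by omega⟩
  have hm := fun j => transfer_cnt ha hb hq j
  have hq1 : cnt q (a - 1) = cnt p (a - 1) - 1 := by
    have h := hm (a - 1); split_ifs at h <;> omega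
  have hq2 : cnt q b = cnt p b + 1 := by
    have h := hm b; split_ifs at h <;> omega
  have hq3 : ∀ j, j ≠ a - 1 → j ≠ b → cnt q j = cnt p j := by
    intro j h1 h2
    have h := hm j; split_ifs at h <;> omega
  -- decomposition of range n
  have hrange1 : (a - 1) ∈ Multiset.range n := Multiset.mem_range.mpr (by omega)
  have hrange2 : b ∈ (Multiset.range n).erase (a - 1) :=
    (Multiset.mem_erase_of_ne hne).mpr (Multiset.mem_range.mpr hbn)
  have hdec : Multiset.range n
      = (a - 1) ::ₘ b ::ₘ (((Multiset.range n).erase (a - 1)).erase b) := by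
    rw [Multiset.cons_erase hrange2, Multiset.cons_erase hrange1]
  have ht' : ∀ x ∈ ((Multiset.range n).erase (a - 1)).erase b, x ≠ a - 1 ∧ x ≠ b := by
    intro x hx
    have hnd : ((Multiset.range n).erase (a - 1)).Nodup :=
      (Multiset.nodup_range n).erase (a - 1)
    have h1 := hnd.mem_erase_iff.mp hx
    have h2 := (Multiset.nodup_range n).mem_erase_iff.mp h1.2
    exact ⟨h2.1, h1.1⟩
  set M := Multiset.map (cnt p) (((Multiset.range n).erase (a - 1)).erase b) with hM
  have hmapp : Multiset.map (cnt p) (Multiset.range n)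
      = cnt p (a - 1) ::ₘ cnt p b ::ₘ M := by
    conv_lhs => rw [hdec]
    rw [Multiset.map_cons, Multiset.map_cons]
  have hmapq : Multiset.map (cnt q) (Multiset.range n)
      = cnt q (a - 1) ::ₘ cnt q b ::ₘ M := by
    conv_lhs => rw [hdec]
    rw [Multiset.map_cons, Multiset.map_cons]
    congr 2
    exact Multiset.map_congr rfl (fun x hx => hq3 x (ht' x hx).1 (ht' x hx).2)
  have h0F : (0 : ℕ) ∉ Multiset.filter (· ≠ 0) M := by
    intro h
    exact absurd (Multiset.of_mem_filter h) (by simp)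
  have hconjp : (conj p).parts
      = cnt p (a - 1) ::ₘ Multiset.filter (· ≠ 0) (cnt p b ::ₘ M) := by
    rw [conj_parts, hmapp, Multiset.filter_cons_of_pos (p := fun x => x ≠ 0) _ (by omega : cnt p (a - 1) ≠ 0)]
  have hEeq : ((conj p).parts.erase (cnt p (a - 1))).erase (cnt p b)
      = Multiset.filter (· ≠ 0) M := by
    rw [hconjp, Multiset.erase_cons_head]
    by_cases hB0 : cnt p b = 0
    · rw [Multiset.filter_cons_of_neg (p := fun x => x ≠ 0) _ (by simp [hB0])]
      rw [hB0]
      exact Multiset.erase_of_notMem h0F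
    · rw [Multiset.filter_cons_of_pos (p := fun x => x ≠ 0) _ hB0, Multiset.erase_cons_head]
  refine ⟨cnt p (a - 1), ?_, cnt p b, ?_, ?_⟩
  · rw [hconjp]; exact Multiset.mem_cons_self _ _
  · by_cases hB0 : cnt p b = 0
    · exact Or.inl hB0
    · right
      rw [hconjp, Multiset.erase_cons_head, Multiset.filter_cons_of_pos (p := fun x => x ≠ 0) _ hB0]
      exact Multiset.mem_cons_self _ _
  · rw [conj_parts, hmapq, hq1, hq2, hEeq]
    by_cases hA1 : cnt p (a - 1) = 1
    · rw [if_pos hA1, hA1]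
      rw [Multiset.filter_cons_of_neg (p := fun x => x ≠ 0) _ (by simp)]
      rw [Multiset.filter_cons_of_pos (p := fun x => x ≠ 0) _ (by omega : cnt p b + 1 ≠ 0)]
    · rw [if_neg hA1]
      rw [Multiset.filter_cons_of_pos (p := fun x => x ≠ 0) _ (by omega : cnt p (a - 1) - 1 ≠ 0)]
      rw [Multiset.filter_cons_of_pos (p := fun x => x ≠ 0) _ (by omega : cnt p b + 1 ≠ 0)]
      exact Multiset.cons_swap _ _ _

lemma conj_injective : Function.Injective (conj : Nat.Partition n → Nat.Partition n) :=
  Function.Involutive.injective conj_conj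

lemma adj_conj {p q : Nat.Partition n} (h : (partitionGraph n).Adj p q) :
    (partitionGraph n).Adj (conj p) (conj q) := by
  obtain ⟨hne, hor⟩ := h
  refine ⟨fun hc => hne (conj_injective hc), ?_⟩
  rcases hor with h | h
  · exact Or.inl (isTransfer_conj hne h)
  · exact Or.inr (isTransfer_conj (Ne.symm hne) h)

lemma omegaLoc_conj (p : Nat.Partition n) : omegaLoc (conj p) = omegaLoc p := by
  classical
  have key : ∀ r : Nat.Partition n,
      {k | ∃ s : Finset (Nat.Partition n), (partitionGraph n).IsNClique k s ∧ r ∈ s} ⊆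
      {k | ∃ s : Finset (Nat.Partition n), (partitionGraph n).IsNClique k s ∧ conj r ∈ s} := by
    intro r k hk
    obtain ⟨s, ⟨hclique, hcard⟩, hmem⟩ := hk
    refine ⟨s.image conj, ⟨?_, ?_⟩, Finset.mem_image_of_mem conj hmem⟩
    · intro x hx y hy hxy
      simp only [Finset.coe_image, Set.mem_image, Finset.mem_coe] at hx hy
      obtain ⟨u, hu, rfl⟩ := hx
      obtain ⟨v, hv, rfl⟩ := hy
      exact adj_conj (hclique (Finset.mem_coe.mpr hu) (Finset.mem_coe.mpr hv)
        (fun h => hxy (by rw [h])))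
    · rw [Finset.card_image_of_injective _ conj_injective, hcard]
  unfold omegaLoc
  congr 1
  apply Set.Subset.antisymm
  · have h2 := key (conj p)
    rwa [conj_conj] at h2
  · exact key p

lemma mem_layer_conj {r : ℕ} {p : Nat.Partition n} (h : p ∈ layer n r) :
    conj p ∈ layer n r := by
  simp only [layer, Set.mem_setOf_eq, dimLoc, omegaLoc_conj] at h ⊢
  exact h

lemma even_card_of_invol {α : Type*} [DecidableEq α] (f : α → α) :
    ∀ m (s : Finset α), s.card = m → (∀ a ∈ s, f a ∈ s ∧ f a ≠ a ∧ f (f a) = a) →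
      Even s.card := by
  intro m
  induction m using Nat.strong_induction_on with
  | _ m ih =>
    intro s hcard hs
    rcases Finset.eq_empty_or_nonempty s with rfl | ⟨a, hamem⟩
    · simp
    · obtain ⟨hfa, hfna, hffa⟩ := hs a hamem
      set t := (s.erase a).erase (f a) with htdef
      have hfa' : f a ∈ s.erase a := Finset.mem_erase.mpr ⟨hfna, hfa⟩
      have hcard2 : t.card + 2 = s.card := by
        have e1 : (s.erase a).card = s.card - 1 := Finset.card_erase_of_mem hamem
        have e2 : t.card = (s.erase a).card - 1 := Finset.card_erase_of_mem hfa'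
        have h1 : 1 ≤ s.card := Finset.card_pos.mpr ⟨a, hamem⟩
        have h2 : 1 ≤ (s.erase a).card := Finset.card_pos.mpr ⟨f a, hfa'⟩
        omega
      have ht : ∀ x ∈ t, f x ∈ t ∧ f x ≠ x ∧ f (f x) = x := by
        intro x hx
        have hxs : x ∈ s := Finset.mem_of_mem_erase (Finset.mem_of_mem_erase hx)
        obtain ⟨h1, h2, h3⟩ := hs x hxs
        have hxa : x ≠ a := (Finset.mem_erase.mp (Finset.mem_of_mem_erase hx)).1
        have hxfa : x ≠ f a := (Finset.mem_erase.mp hx).1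
        refine ⟨?_, h2, h3⟩
        refine Finset.mem_erase.mpr ⟨fun hc => hxa ?_, Finset.mem_erase.mpr
          ⟨fun hc => hxfa ?_, h1⟩⟩
        · rw [← h3, hc, hffa]
        · rw [← h3, hc]
      have heven := ih t.card (by omega) t rfl ht
      rw [← hcard2]
      exact heven.add even_two


/-- for every `n ≥ 1` and every `r ≥ 0`, the set of
non-self-conjugate partitions in the layer `L_r(n)` has even cardinality. -/
theorem even_ncard_non_self_conjugate (n : ℕ) (hn : 1 ≤ n) (r : ℕ) :
    Even ({p | p ∈ layer n r ∧ p ≠ conj p}.ncard) := by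
  classical
  rw [Set.ncard_eq_toFinset_card' {p | p ∈ layer n r ∧ p ≠ conj p}]
  apply even_card_of_invol (conj : Nat.Partition n → Nat.Partition n) _ _ rfl
  intro a ha
  rw [Set.mem_toFinset] at ha
  obtain ⟨hlay, hne⟩ := ha
  refine ⟨?_, ?_, conj_conj a⟩
  · rw [Set.mem_toFinset]
    exact ⟨mem_layer_conj hlay, by rw [conj_conj]; exact Ne.symm hne⟩
  · exact Ne.symm hne


end PartitionLayers
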